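/- If a family of measurable sets satisfies Ω_{k+1} ⊆ Ω_k and each Ω_k is a disjoint union of cubes Q^k_j with |Q^k_j ∩ Ω_{k+1}| ≤ (1/2)|Q^k_j|, then for any fixed cube Q, defining 𝒬_0(Q) as the maximal cubes of the family contained in Q and inductively 𝒬_k(Q) as the maximal cubes of the family strictly contained in some cube of 𝒬_{k-1}(Q), one has |⋃𝒬_k(Q)| ≤ 2^{-k}|Q| for all k ≥ 0. -/

import Mathlib

/-!
Two dyadic cubes that meet are nested, so the cubes of one generation are pairwise disjoint.
If `Qf k' j'` lies strictly inside `Qf k j`, then `k' > k`: for `k' = k` this contradicts the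
disjointness of level `k`, and for `k' < k` the cube would lie in `Ω_k ⊆ Ω_{k'+1}`, contradicting
sparseness at level `k'`. Hence all cubes of the family strictly inside `Qf k j` lie in
`Qf k j ∩ Ω_{k+1}`, which has at most half its measure. Summing over the disjoint cubes of a
generation, each generation has at most half the measure of the previous one.
-/

open MeasureTheory Set ENNReal

noncomputable section

/-- A dyadic cube in `ℝ^d`, given by a scale `k` and position `m`. -/
structure DC (d : ℕ) where
  k : ℤ
  m : Fin d → ℤ

namespace DC

variable {d : ℕ}

/-- The underlying set of a dyadic cube. -/
def set (Q : DC d) : Set (Fin d → ℝ) :=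
  {x | ∀ i, (Q.m i : ℝ) * 2 ^ Q.k ≤ x i ∧ x i < ((Q.m i : ℝ) + 1) * 2 ^ Q.k}

/-- The side length of a dyadic cube. -/
def side (Q : DC d) : ℝ := 2 ^ Q.k

/-- The dyadic parent. -/
def parent (Q : DC d) : DC d := ⟨Q.k + 1, fun i => Int.fdiv (Q.m i) 2⟩

/-- The `i`-th dyadic ancestor. -/
def anc (Q : DC d) : ℕ → DC d
  | 0 => Q
  | (i + 1) => (Q.anc i).parent

end DC

/-- An axis-parallel cube with corner `c` and side length `h`. -/
def cube {d : ℕ} (c : Fin d → ℝ) (h : ℝ) : Set (Fin d → ℝ) :=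
  {x | ∀ i, c i ≤ x i ∧ x i ≤ c i + h}

/-- The generations `𝒬_k(Q0)` of maximal cubes of the family `𝒬` inside `Q0`:
`𝒬_0(Q0)` are the maximal cubes of `𝒬` contained in `Q0`, and `𝒬_{k+1}(Q0)` are the
maximal cubes of `𝒬` strictly contained in some cube of `𝒬_k(Q0)`. -/
def gen {d : ℕ} (𝒬 : Set (DC d)) (Q0 : DC d) : ℕ → Set (DC d)
  | 0 => {R | R ∈ 𝒬 ∧ R.set ⊆ Q0.set ∧
      ∀ R' ∈ 𝒬, R'.set ⊆ Q0.set → R.set ⊆ R'.set → R'.set ⊆ R.set}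
  | (n + 1) => {R | R ∈ 𝒬 ∧ (∃ S ∈ gen 𝒬 Q0 n, R.set ⊂ S.set) ∧
      ∀ R' ∈ 𝒬, (∃ S ∈ gen 𝒬 Q0 n, R'.set ⊂ S.set) → R.set ⊆ R'.set → R'.set ⊆ R.set}

theorem Int.floor_div_zpow_congr {b : ℕ} (hb : b ≠ 0) {x y : ℝ} {k k' : ℤ} (hk : k ≤ k')
    (h : ⌊x / (b : ℝ) ^ k⌋ = ⌊y / (b : ℝ) ^ k⌋) : ⌊x / (b : ℝ) ^ k'⌋ = ⌊y / (b : ℝ) ^ k'⌋ := by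
  obtain ⟨e, rfl⟩ := Int.exists_add_of_le hk
  have hdiv : ∀ z : ℝ, z / (b : ℝ) ^ (k + (e : ℤ)) = z / (b : ℝ) ^ k / ((b ^ e : ℕ) : ℝ) :=
    fun z => by rw [zpow_add₀ (Nat.cast_ne_zero.mpr hb), zpow_natCast, div_div, Nat.cast_pow]
  rw [hdiv, hdiv, Int.floor_div_natCast, Int.floor_div_natCast, h]

namespace DC

variable {d : ℕ}

theorem set_eq_pi (Q : DC d) : Q.set =
    Set.pi univ fun i => Ico ((Q.m i : ℝ) * 2 ^ Q.k) (((Q.m i : ℝ) + 1) * 2 ^ Q.k) := by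
  ext x
  simp [DC.set, Set.mem_pi, Set.mem_Ico]

theorem measurableSet_set (Q : DC d) : MeasurableSet Q.set := by
  rw [set_eq_pi]
  exact MeasurableSet.univ_pi fun _ => measurableSet_Ico

theorem volume_set (Q : DC d) : volume Q.set = ENNReal.ofReal (2 ^ Q.k) ^ d := by
  simp only [set_eq_pi, volume_pi_pi, Real.volume_Ico, add_mul, one_mul, add_sub_cancel_left,
    Finset.prod_const, Finset.card_univ, Fintype.card_fin]

theorem volume_set_ne_zero (Q : DC d) : volume Q.set ≠ 0 := by
  rw [volume_set]
  exact pow_ne_zero _ (ENNReal.ofReal_pos.mpr (by positivity)).ne'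

theorem volume_set_ne_top (Q : DC d) : volume Q.set ≠ ⊤ := by
  rw [volume_set]
  exact ENNReal.pow_ne_top ENNReal.ofReal_ne_top

theorem mem_set_iff_floor (Q : DC d) (x : Fin d → ℝ) :
    x ∈ Q.set ↔ ∀ i, ⌊x i / 2 ^ Q.k⌋ = Q.m i := by
  have h2 : (0 : ℝ) < 2 ^ Q.k := by positivity
  simp only [DC.set, mem_ofPred_eq, Int.floor_eq_iff, le_div_iff₀ h2, div_lt_iff₀ h2]

theorem set_subset_or_subset {Q Q' : DC d} (h : (Q.set ∩ Q'.set).Nonempty) :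
    Q.set ⊆ Q'.set ∨ Q'.set ⊆ Q.set := by
  obtain ⟨x, hx, hx'⟩ := h
  have key : ∀ {R R' : DC d}, R.k ≤ R'.k → x ∈ R.set → x ∈ R'.set → R.set ⊆ R'.set := by
    intro R R' hk hx hx' y hy
    rw [mem_set_iff_floor] at hx hx' hy ⊢
    intro i
    rw [← hx' i]
    have hyx : ⌊y i / ((2 : ℕ) : ℝ) ^ R.k⌋ = ⌊x i / ((2 : ℕ) : ℝ) ^ R.k⌋ := by
      exact_mod_cast (hy i).trans (hx i).symm
    exact_mod_cast Int.floor_div_zpow_congr two_ne_zero hk hyx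
  rcases le_total Q.k Q'.k with hk | hk
  · exact .inl (key hk hx hx')
  · exact .inr (key hk hx' hx)

end DC

theorem MeasureTheory.measure_biUnion_le_mul_measure_sUnion {α : Type*} [MeasurableSpace α]
    {μ : Measure α} {T : Set (Set α)} (hT : T.Countable) (hd : T.Pairwise Disjoint)
    (hm : ∀ t ∈ T, MeasurableSet t) {g : Set α → Set α} {c : ℝ≥0∞}
    (hg : ∀ t ∈ T, μ (g t) ≤ c * μ t) : μ (⋃ t ∈ T, g t) ≤ c * μ (⋃₀ T) :=
  calc μ (⋃ t ∈ T, g t) ≤ ∑' t : T, μ (g t) := measure_biUnion_le μ hT g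
    _ ≤ ∑' t : T, c * μ t := ENNReal.tsum_le_tsum fun t => hg t t.2
    _ = c * μ (⋃₀ T) := by rw [ENNReal.tsum_mul_left, measure_sUnion hT hd hm]

section Generations

variable {d : ℕ} {𝒬 : Set (DC d)} {Q0 : DC d}

theorem gen_subset (n : ℕ) : gen 𝒬 Q0 n ⊆ 𝒬 := by
  cases n <;> exact fun R hR => hR.1

theorem set_subset_of_mem_gen_of_subset {n : ℕ} {S S' : DC d} (hS : S ∈ gen 𝒬 Q0 n)
    (hS' : S' ∈ gen 𝒬 Q0 n) (h : S.set ⊆ S'.set) : S'.set ⊆ S.set := by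
  cases n <;> exact hS.2.2 S' hS'.1 hS'.2.1 h

theorem pairwise_disjoint_image_set_gen (n : ℕ) : (DC.set '' gen 𝒬 Q0 n).Pairwise Disjoint := by
  rintro _ ⟨S, hS, rfl⟩ _ ⟨S', hS', rfl⟩ hne
  by_contra h
  apply hne
  rcases DC.set_subset_or_subset (not_disjoint_iff_nonempty_inter.mp h) with h | h
  · exact h.antisymm (set_subset_of_mem_gen_of_subset hS hS' h)
  · exact (set_subset_of_mem_gen_of_subset hS' hS h).antisymm h

def unionStrictSubcubes (𝒬 : Set (DC d)) (s : Set (Fin d → ℝ)) : Set (Fin d → ℝ) :=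
  ⋃ R ∈ 𝒬, ⋃ (_ : R.set ⊂ s), R.set

theorem iUnion_gen_succ_subset (n : ℕ) :
    ⋃ R ∈ gen 𝒬 Q0 (n + 1), R.set ⊆ ⋃ t ∈ DC.set '' gen 𝒬 Q0 n, unionStrictSubcubes 𝒬 t := by
  refine iUnion₂_subset fun R ⟨hR, ⟨S, hS, hRS⟩, _⟩ => ?_
  refine subset_iUnion₂_of_subset S.set ⟨S, hS, rfl⟩ ?_
  exact subset_iUnion₂_of_subset R hR (subset_iUnion_of_subset hRS subset_rfl)

theorem volume_iUnion_gen_succ_le (h𝒬 : 𝒬.Countable)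
    (hhalf : ∀ S ∈ 𝒬, volume (unionStrictSubcubes 𝒬 S.set) ≤ volume S.set / 2) (n : ℕ) :
    volume (⋃ R ∈ gen 𝒬 Q0 (n + 1), R.set) ≤ volume (⋃ R ∈ gen 𝒬 Q0 n, R.set) / 2 := by
  have hT : (DC.set '' gen 𝒬 Q0 n).Countable := (h𝒬.mono (gen_subset n)).image _
  have hT_meas : ∀ t ∈ DC.set '' gen 𝒬 Q0 n, MeasurableSet t := by
    rintro _ ⟨S, -, rfl⟩
    exact S.measurableSet_set
  have hT_half : ∀ t ∈ DC.set '' gen 𝒬 Q0 n, volume (unionStrictSubcubes 𝒬 t) ≤ 2⁻¹ * volume t := by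
    rintro _ ⟨S, hS, rfl⟩
    rw [← ENNReal.div_eq_inv_mul]
    exact hhalf S (gen_subset n hS)
  calc volume (⋃ R ∈ gen 𝒬 Q0 (n + 1), R.set)
      ≤ volume (⋃ t ∈ DC.set '' gen 𝒬 Q0 n, unionStrictSubcubes 𝒬 t) :=
        measure_mono (iUnion_gen_succ_subset n)
    _ ≤ 2⁻¹ * volume (⋃₀ (DC.set '' gen 𝒬 Q0 n)) :=
        measure_biUnion_le_mul_measure_sUnion hT (pairwise_disjoint_image_set_gen n) hT_meas hT_half
    _ = volume (⋃ R ∈ gen 𝒬 Q0 n, R.set) / 2 := by rw [sUnion_image, ENNReal.div_eq_inv_mul]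

theorem volume_iUnion_gen_le (h𝒬 : 𝒬.Countable)
    (hhalf : ∀ S ∈ 𝒬, volume (unionStrictSubcubes 𝒬 S.set) ≤ volume S.set / 2) (n : ℕ) :
    volume (⋃ R ∈ gen 𝒬 Q0 n, R.set) ≤ volume Q0.set / 2 ^ n := by
  induction n with
  | zero => simpa using measure_mono (iUnion₂_subset fun R hR => hR.2.1)
  | succ n ih =>
    calc volume (⋃ R ∈ gen 𝒬 Q0 (n + 1), R.set)
        ≤ volume (⋃ R ∈ gen 𝒬 Q0 n, R.set) / 2 := volume_iUnion_gen_succ_le h𝒬 hhalf n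
      _ ≤ volume Q0.set / 2 ^ n / 2 := by gcongr
      _ = volume Q0.set / 2 ^ (n + 1) := by
        rw [pow_succ, div_eq_mul_inv, div_eq_mul_inv, div_eq_mul_inv, mul_assoc,
          ENNReal.mul_inv (by simp) (by simp)]

end Generations

structure IsSparseFamily {d : ℕ} (Qf : ℕ → ℕ → DC d) : Prop where
  disjoint : ∀ k, Pairwise fun j j' => Disjoint (Qf k j).set (Qf k j').set
  nested : ∀ k, (⋃ j, (Qf (k + 1) j).set) ⊆ ⋃ j, (Qf k j).set
  sparse : ∀ k j, volume ((Qf k j).set ∩ ⋃ j', (Qf (k + 1) j').set) ≤ volume (Qf k j).set / 2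

namespace IsSparseFamily

variable {d : ℕ} {Qf : ℕ → ℕ → DC d}

theorem antitone (hQ : IsSparseFamily Qf) : Antitone fun k => ⋃ j, (Qf k j).set :=
  antitone_nat_of_succ_le hQ.nested

theorem subset_iUnion_succ_of_ssubset (hQ : IsSparseFamily Qf) {k j k' j' : ℕ}
    (hsub : (Qf k' j').set ⊂ (Qf k j).set) : (Qf k' j').set ⊆ ⋃ j'', (Qf (k + 1) j'').set := by
  rcases lt_trichotomy k' k with hlt | rfl | hgt
  · have hΩ : (Qf k' j').set ⊆ ⋃ j'', (Qf (k' + 1) j'').set :=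
      hsub.subset.trans ((subset_iUnion (fun j => (Qf k j).set) j).trans (hQ.antitone hlt))
    have h := hQ.sparse k' j'
    rw [inter_eq_left.mpr hΩ] at h
    exact absurd h (not_le.mpr (ENNReal.half_lt_self (Qf k' j').volume_set_ne_zero
      (Qf k' j').volume_set_ne_top))
  · obtain ⟨x, hx⟩ := nonempty_of_measure_ne_zero (Qf k' j').volume_set_ne_zero
    have hj : j' ≠ j := fun h => hsub.ne (by rw [h])
    exact absurd (hsub.subset hx) (disjoint_left.mp (hQ.disjoint k' hj) hx)
  · exact (subset_iUnion (fun j => (Qf k' j).set) j').trans (hQ.antitone hgt)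

theorem volume_unionStrictSubcubes_le (hQ : IsSparseFamily Qf) {S : DC d}
    (hS : S ∈ {R | ∃ k j, Qf k j = R}) :
    volume (unionStrictSubcubes {R | ∃ k j, Qf k j = R} S.set) ≤ volume S.set / 2 := by
  obtain ⟨k, j, rfl⟩ := hS
  refine (measure_mono ?_).trans (hQ.sparse k j)
  refine iUnion₂_subset fun R hR => iUnion_subset fun hsub => ?_
  obtain ⟨k', j', rfl⟩ := hR
  exact subset_inter hsub.subset (hQ.subset_iUnion_succ_of_ssubset hsub)

end IsSparseFamily

theorem countable_setOf_exists_eq {α : Type*} (f : ℕ → ℕ → α) :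
    {a | ∃ k j, f k j = a}.Countable :=
  (countable_range (Function.uncurry f)).mono <| by
    rintro _ ⟨k, j, rfl⟩
    exact ⟨(k, j), rfl⟩

/-- for a Calderón–Zygmund-type sparse family `{Q^k_j}` with
`Ω_{k+1} ⊆ Ω_k` (disjoint unions of cubes) and `|Q^k_j ∩ Ω_{k+1}| ≤ |Q^k_j|/2`, the union of
the `k`-th generation of maximal cubes inside any cube `Q0` has measure at most `2^{-k}|Q0|`. -/
theorem stmt0 {d : ℕ} (Qf : ℕ → ℕ → DC d)
    (hdisj : ∀ k, Pairwise fun j j' => Disjoint (Qf k j).set (Qf k j').set)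
    (hnest : ∀ k, (⋃ j, (Qf (k + 1) j).set) ⊆ ⋃ j, (Qf k j).set)
    (hsparse : ∀ k j,
      volume ((Qf k j).set ∩ ⋃ j', (Qf (k + 1) j').set) ≤ volume (Qf k j).set / 2)
    (Q0 : DC d) (k : ℕ) :
    volume (⋃ R ∈ gen {R | ∃ k' j, Qf k' j = R} Q0 k, DC.set R)
      ≤ volume Q0.set / 2 ^ k := by
  have hQ : IsSparseFamily Qf := ⟨hdisj, hnest, hsparse⟩
  exact volume_iUnion_gen_le (countable_setOf_exists_eq Qf)
    (fun _ => hQ.volume_unionStrictSubcubes_le) k
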